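/- Let X be a nonnegative square-integrable real random variable, x > 0 a real number and R ≥ 1 an integer, and set μ = E[X] and p_{Rx} = P(X > R·x). If the threshold satisfies x ≥ 2μ / (1 + (2R − 1)·p_{Rx}), then the R-th marking step does not increase the variance: Var(X_R) ≤ Var(X_{R−1}), where X_r := X − x·Σ_{i=1}^{r} 1{X > i·x}. -/

import Mathlib

open MeasureTheory ProbabilityTheory Finset
open scoped ProbabilityTheory

/-- The marked-corrected variable `X_r := X − x·Σ_{i=1}^{r} 1{X > i·x}`. -/
noncomputable def markedCorrected {Ω : Type*} (X : Ω → ℝ) (x : ℝ) (r : ℕ) : Ω → ℝ :=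
  fun ω => X ω - x * ∑ i ∈ Finset.Icc 1 r, (if (i : ℝ) * x < X ω then (1 : ℝ) else 0)

/-!
With `Y = X_{R-1}` and `B = 1{X > R x}`, the marking step is `X_R = Y - x B`, so
`Var X_R = Var Y - 2x Cov(Y, B) + x² p (1 - p)` where `p = P(X > R x)`. On `{B = 1}` all
`R - 1` earlier marks are set, so `Y = X - (R - 1) x > x` there, while `Y ≤ X - (R - 1) x B`
everywhere. Hence `Cov(Y, B) = E[Y B] - p E[Y] ≥ p (x - μ + (R - 1) x p)`, and the threshold
condition is exactly what makes `2x` times this bound dominate `x² p (1 - p)`.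
-/

section Indicator

variable {Ω : Type*} [MeasurableSpace Ω] {μ : Measure Ω} {s : Set Ω}

lemma memLp_indicator_one [IsFiniteMeasure μ] (p : ENNReal) (hs : MeasurableSet s) :
    MemLp (s.indicator (1 : Ω → ℝ)) p μ :=
  memLp_indicator_const p hs 1 (Or.inr (measure_ne_top μ s))

variable [IsProbabilityMeasure μ] {Y : Ω → ℝ}

lemma covariance_indicator_one_right (hY : MemLp Y 2 μ) (hs : MeasurableSet s) :
    cov[Y, s.indicator (1 : Ω → ℝ); μ] = ∫ ω in s, Y ω ∂μ - μ[Y] * μ.real s := by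
  rw [covariance_eq_sub hY (memLp_indicator_one 2 hs), integral_indicator_one hs, ← integral_indicator hs]
  congr 2
  funext ω
  by_cases hω : ω ∈ s <;> simp [hω]

lemma variance_indicator_one (hs : MeasurableSet s) :
    Var[s.indicator (1 : Ω → ℝ); μ] = μ.real s * (1 - μ.real s) := by
  have h1s := memLp_indicator_one (μ := μ) 2 hs
  rw [← covariance_self h1s.aemeasurable, covariance_indicator_one_right h1s hs,
    integral_indicator_one hs, integral_indicator_one hs, measureReal_restrict_apply_self]
  ring

lemma variance_sub_const_mul_indicator_one (hY : MemLp Y 2 μ) (hs : MeasurableSet s) (c : ℝ) :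
    Var[fun ω ↦ Y ω - c * s.indicator 1 ω; μ]
      = Var[Y; μ] - 2 * c * cov[Y, s.indicator 1; μ] + c ^ 2 * (μ.real s * (1 - μ.real s)) := by
  rw [variance_fun_sub hY ((memLp_indicator_one 2 hs).const_mul c), covariance_const_mul_right, variance_const_mul,
    variance_indicator_one hs]
  ring

end Indicator

section MarkedCorrected

variable {Ω : Type*} {X : Ω → ℝ} {x : ℝ}

@[simp]
lemma markedCorrected_zero : markedCorrected X x 0 = X := by
  funext ω
  simp [markedCorrected]

lemma markedCorrected_succ (r : ℕ) :
    markedCorrected X x (r + 1) = fun ω ↦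
      markedCorrected X x r ω - x * {ω | ((r + 1 : ℕ) : ℝ) * x < X ω}.indicator 1 ω := by
  funext ω
  simp only [markedCorrected, Finset.sum_Icc_succ_top (Nat.le_add_left 1 r), Set.indicator_apply,
    Set.mem_ofPred_eq, Pi.one_apply]
  ring

lemma markedCorrected_le (hx : 0 ≤ x) (r : ℕ) (ω : Ω) : markedCorrected X x r ω ≤ X ω := by
  refine sub_le_self _ (mul_nonneg hx (Finset.sum_nonneg fun i _ ↦ ?_))
  split_ifs <;> norm_num

lemma markedCorrected_eq_of_mul_lt (hx : 0 ≤ x) {r : ℕ} {ω : Ω} (h : r * x < X ω) :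
    markedCorrected X x r ω = X ω - r * x := by
  have hall : ∀ i ∈ Finset.Icc 1 r, (if (i : ℝ) * x < X ω then (1 : ℝ) else 0) = 1 := by
    intro i hi
    have hir : (i : ℝ) ≤ r := by exact_mod_cast (Finset.mem_Icc.1 hi).2
    rw [if_pos ((mul_le_mul_of_nonneg_right hir hx).trans_lt h)]
  simp only [markedCorrected, Finset.sum_congr rfl hall, Finset.sum_const, Nat.card_Icc,
    Nat.add_sub_cancel, nsmul_eq_mul, mul_one]
  ring

variable [MeasurableSpace Ω] {μ : Measure Ω} [IsFiniteMeasure μ]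

lemma memLp_markedCorrected {p : ENNReal} (hm : Measurable X) (hX : MemLp X p μ) (r : ℕ) :
    MemLp (markedCorrected X x r) p μ := by
  induction r with
  | zero => rwa [markedCorrected_zero]
  | succ r ih =>
    rw [markedCorrected_succ]
    exact ih.sub ((memLp_indicator_one p (measurableSet_lt measurable_const hm)).const_mul x)

lemma integrable_markedCorrected (hm : Measurable X) (hX : Integrable X μ) (r : ℕ) :
    Integrable (markedCorrected X x r) μ :=
  memLp_one_iff_integrable.1 (memLp_markedCorrected hm (memLp_one_iff_integrable.2 hX) r)

lemma mul_measureReal_le_setIntegral_markedCorrected (hx : 0 ≤ x) (hm : Measurable X)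
    (hX : Integrable X μ) (r : ℕ) :
    x * μ.real {ω | ((r + 1 : ℕ) : ℝ) * x < X ω}
      ≤ ∫ ω in {ω | ((r + 1 : ℕ) : ℝ) * x < X ω}, markedCorrected X x r ω ∂μ := by
  refine setIntegral_ge_of_const_le_real (measurableSet_lt measurable_const hm)
    (measure_ne_top μ _) (fun ω hω ↦ ?_)
    (integrable_markedCorrected hm hX r).integrableOn
  have hω' : ((r : ℝ) + 1) * x < X ω := by exact_mod_cast hω
  rw [markedCorrected_eq_of_mul_lt hx (by linarith)]
  linarith

lemma integral_markedCorrected_le (hx : 0 ≤ x) (hm : Measurable X) (hX : Integrable X μ)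
    (r : ℕ) :
    μ[markedCorrected X x r] ≤ μ[X] - r * x * μ.real {ω | ((r + 1 : ℕ) : ℝ) * x < X ω} := by
  set s := {ω | ((r + 1 : ℕ) : ℝ) * x < X ω}
  have hs : MeasurableSet s := measurableSet_lt measurable_const hm
  have h1s : Integrable (s.indicator (1 : Ω → ℝ)) μ :=
    memLp_one_iff_integrable.1 (memLp_indicator_one 1 hs)
  calc μ[markedCorrected X x r] ≤ ∫ ω, X ω - r * x * s.indicator 1 ω ∂μ := by
        refine integral_mono (integrable_markedCorrected hm hX r) (hX.sub (h1s.const_mul _))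
          fun ω ↦ ?_
        by_cases hω : ω ∈ s
        · simp only [Set.indicator_of_mem hω, Pi.one_apply, mul_one]
          have hω' : ((r : ℝ) + 1) * x < X ω := by exact_mod_cast hω
          exact (markedCorrected_eq_of_mul_lt hx (by linarith)).le
        · simp only [Set.indicator_of_notMem hω, mul_zero, sub_zero]
          exact markedCorrected_le hx r ω
    _ = μ[X] - r * x * μ.real s := by
        rw [integral_sub hX (h1s.const_mul _), integral_const_mul, integral_indicator_one hs]

end MarkedCorrected

theorem marking_step_variance_nonincreasing_general
    {Ω : Type*} [MeasureSpace Ω] [IsProbabilityMeasure (ℙ : Measure Ω)]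
    (X : Ω → ℝ) (hm : Measurable X) (hL : MemLp X 2 ℙ)
    (x : ℝ) (hx : 0 < x) (R : ℕ) (hR : 1 ≤ R)
    (hthr : x ≥ 2 * 𝔼[X]
        / (1 + (2 * (R : ℝ) - 1) * (ℙ {ω | (R : ℝ) * x < X ω}).toReal)) :
    Var[markedCorrected X x R] ≤ Var[markedCorrected X x (R - 1)] := by
  obtain ⟨r, rfl⟩ : ∃ r, R = r + 1 := ⟨R - 1, by omega⟩
  set s := {ω | ((r + 1 : ℕ) : ℝ) * x < X ω}
  have hs : MeasurableSet s := measurableSet_lt measurable_const hm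
  have hY : MemLp (markedCorrected X x r) 2 ℙ := memLp_markedCorrected hm hL r
  have hX : Integrable X ℙ := hL.integrable one_le_two
  have h_on_s := mul_measureReal_le_setIntegral_markedCorrected hx.le hm hX r
  have h_mean := integral_markedCorrected_le hx.le hm hX r
  have hxp : 0 ≤ x * (ℙ : Measure Ω).real s := by positivity
  have h_thr : 2 * 𝔼[X] ≤ x * (1 + (2 * r + 1) * (ℙ : Measure Ω).real s) := by
    rw [← measureReal_def, ge_iff_le, div_le_iff₀ (by push_cast; ring_nf; positivity)] at hthr
    push_cast at hthr
    linarith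
  rw [Nat.add_sub_cancel, markedCorrected_succ, variance_sub_const_mul_indicator_one hY hs,
    covariance_indicator_one_right hY hs]
  -- 2x·cov − x²·p(1−p) = 2x(∫_s Y − xp) + 2xp(μ − rxp − E[Y]) + xp(x(1 + (2r+1)p) − 2μ)
  linarith [mul_nonneg hx.le (sub_nonneg.2 h_on_s),
    mul_nonneg hxp (sub_nonneg.2 h_mean), mul_nonneg hxp (sub_nonneg.2 h_thr)]

/-- **Sufficient condition for the `R`-th marking step not to increase variance.**
If `X ≥ 0` a.s. and `x ≥ 2μ/(1 + (2R − 1)·p_{Rx})` then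
`Var(X_R) ≤ Var(X_{R−1})`. -/
theorem marking_step_variance_nonincreasing
    {Ω : Type*} [MeasureSpace Ω] [IsProbabilityMeasure (ℙ : Measure Ω)]
    (X : Ω → ℝ) (hm : Measurable X) (hL : MemLp X 2 ℙ)
    (hpos : ∀ᵐ ω ∂(ℙ : Measure Ω), 0 ≤ X ω)
    (x : ℝ) (hx : 0 < x) (R : ℕ) (hR : 1 ≤ R)
    (hthr : x ≥ 2 * 𝔼[X]
        / (1 + (2 * (R : ℝ) - 1) * (ℙ {ω | (R : ℝ) * x < X ω}).toReal)) :
    Var[markedCorrected X x R] ≤ Var[markedCorrected X x (R - 1)] :=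
  marking_step_variance_nonincreasing_general X hm hL x hx R hR hthr
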